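/- arXiv:1510.03419 — 5 statements merged into one kernel-verified Lean document; each statement's English description precedes it below -/
import Mathlib

section
/- Let K be a finite abelian group and consider a Mermin measurement scenario with data (K, a, M, n, N, n₀, R) as in the context. Then there exists a probabilistic non-contextual (local) hidden variable model for the scenario — i.e. a function p : (ZMod N × Fin (M+1) → K) → ℝ with p s ≥ 0 for all s, ∑_{s} p s = 1 (sum over all global assignments s), such that (a) for every w : ZMod N → K, ∑ over those s with s (i, 0) = w i for all i of p s equals (Fintype.card K : ℝ)^(N−1))⁻¹ if ∑_i w i = 0 and equals 0 otherwise, and (b) for every v : ZMod N and every w : ZMod N → K, ∑ over those s with s (i, R (i + v)) = w i for all i of p s equals ((Fintype.card K : ℝ)^(N−1))⁻¹ if ∑_i w i = a and equals 0 otherwise — if and only if there exists y : Fin M → K with ∑_{r : Fin M} (n r) • y r = a. -/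
/-!
If `p` is a model and `p s > 0`, the restriction of `s` to each context lies in that context's
support: the control sum of `s` is `0` and each of the `N` variation sums is `a`. Adding up the
variation sums, party `i` meets the `r`-th phase exactly `#R⁻¹(r)` times, so
`a = N • a = ∑ r, n r • y r` with `y r = ∑ i, s (i, r + 1)` (the trivial phase contributes `0`).

Conversely, given `y`, set `δ = (0, y)` and let party `i` answer `x i + δ r` to the `r`-th
measurement, with `x` uniform among the tuples of sum `0`. On a context `c` exactly one `x` yields
a given outcome `w`, namely `w - δ ∘ c`, and it has sum `0` iff `∑ w = ∑ δ ∘ c`, which is `0` on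
the control context and `a` on every variation context.
-/

open Finset

section Counting

variable {ι K : Type*} [Fintype ι] [DecidableEq ι] [AddCommGroup K] [Fintype K] [DecidableEq K]

theorem card_filter_sum_eq_zero [Nonempty ι] :
    #{w : ι → K | ∑ i, w i = 0} = Fintype.card K ^ (Fintype.card ι - 1) := by
  let σ : (ι → K) →+ K := ∑ i, Pi.evalAddMonoidHom (fun _ => K) i
  have hσ (w : ι → K) : σ w = ∑ i, w i := by simp [σ]
  obtain ⟨i₀⟩ := ‹Nonempty ι›
  have hfiber (k : K) : #{w : ι → K | ∑ i, w i = k} = #{w : ι → K | ∑ i, w i = 0} := by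
    simpa only [hσ] using
      AddMonoidHom.card_fiber_eq_of_mem_range σ ⟨Pi.single i₀ k, by simp [hσ]⟩ ⟨0, map_zero σ⟩
  have hcard : Fintype.card K ^ Fintype.card ι = Fintype.card K * #{w : ι → K | ∑ i, w i = 0} := by
    rw [← Fintype.card_fun, ← card_univ,
      card_eq_sum_card_fiberwise (f := fun w : ι → K => ∑ i, w i) (t := univ) (by simp)]
    simp [hfiber]
  rw [← Nat.sub_add_cancel (Fintype.card_pos (α := ι)), pow_succ'] at hcard
  exact (Nat.eq_of_mul_eq_mul_left Fintype.card_pos hcard).symm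

theorem card_filter_sum_eq_zero_and_add_eq (d w : ι → K) :
    #{x : ι → K | ∑ i, x i = 0 ∧ ∀ i, x i + d i = w i} =
      if ∑ i, w i = ∑ i, d i then 1 else 0 := by
  have hx (x : ι → K) : (∀ i, x i + d i = w i) ↔ x = w - d := by
    simp [funext_iff, eq_sub_iff_add_eq]
  simp_rw [hx, and_comm (a := _ = (0 : K))]
  rw [← filter_filter, filter_eq' univ, if_pos (mem_univ _), filter_singleton]
  simp [sum_sub_distrib, sub_eq_zero, apply_ite card]

end Counting

theorem Fintype.sum_comp_eq_sum_card_fiber_nsmul {ι κ M : Type*} [Fintype ι] [Fintype κ]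
    [DecidableEq κ] [AddCommMonoid M] (R : ι → κ) (z : κ → M) :
    ∑ j, z (R j) = ∑ t, #{j | R j = t} • z t :=
  (Finset.sum_fiberwise' univ R z).symm.trans (Finset.sum_congr rfl fun _ _ => sum_const _)

section Marginal

variable {α ι K : Type*} [Fintype α] [DecidableEq α] [Fintype ι] [DecidableEq K] [Fintype K]

def marginal (p : (α → K) → ℝ) (c : ι → α) (w : ι → K) : ℝ :=
  ∑ s with ∀ i, s (c i) = w i, p s

theorem of_marginal_eq_ite_of_pos {p : (α → K) → ℝ} (hp : ∀ s, 0 ≤ p s) {s : α → K}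
    (hs : 0 < p s) (c : ι → α) {P : Prop} [Decidable P] {x : ℝ}
    (h : marginal p c (fun i => s (c i)) = if P then x else 0) : P := by
  by_contra hP
  rw [marginal, if_neg hP] at h
  have := single_le_sum (f := p) (fun t _ => hp t)
    (show s ∈ univ.filter fun t => ∀ i, t (c i) = s (c i) by simp)
  linarith

end Marginal

section Model

variable {ι κ K : Type*} [Fintype ι] [DecidableEq ι] [Fintype κ]
  [AddCommGroup K] [Fintype K] [DecidableEq K] (δ : κ → K)

noncomputable def shiftedModel (s : ι × κ → K) : ℝ :=
  ((Fintype.card K : ℝ) ^ (Fintype.card ι - 1))⁻¹ *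
    #{x : ι → K | ∑ i, x i = 0 ∧ (fun q : ι × κ => x q.1 + δ q.2) = s}

theorem shiftedModel_nonneg (s : ι × κ → K) : 0 ≤ shiftedModel δ s := by
  unfold shiftedModel; positivity

theorem sum_shiftedModel (F : Finset (ι × κ → K)) :
    ∑ s ∈ F, shiftedModel δ s = ((Fintype.card K : ℝ) ^ (Fintype.card ι - 1))⁻¹ *
      #{x : ι → K | ∑ i, x i = 0 ∧ (fun q : ι × κ => x q.1 + δ q.2) ∈ F} := by
  simp only [shiftedModel, ← mul_sum, ← filter_filter]
  rw [← Nat.cast_sum, sum_card_fiberwise_eq_card_filter]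

variable [DecidableEq κ]

theorem sum_univ_shiftedModel [Nonempty ι] : ∑ s : ι × κ → K, shiftedModel δ s = 1 := by
  rw [sum_shiftedModel]
  simp [card_filter_sum_eq_zero]

theorem marginal_shiftedModel (c : ι → κ) (w : ι → K) :
    marginal (shiftedModel δ) (fun i => (i, c i)) w =
      if ∑ i, w i = ∑ i, δ (c i) then ((Fintype.card K : ℝ) ^ (Fintype.card ι - 1))⁻¹ else 0 := by
  rw [marginal, sum_shiftedModel]
  simp only [mem_filter, mem_univ, true_and]
  rw [card_filter_sum_eq_zero_and_add_eq (fun i => δ (c i)) w]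
  split_ifs <;> simp

end Model

section Scenario

variable {ι K : Type*} [Fintype ι] [AddCommGroup K] {M : ℕ} {n : Fin M → ℕ}
  {R : ι → Fin (M + 1)}

theorem sum_comp_eq_sum_nsmul_succ (hRr : ∀ r : Fin M, #{i | R i = r.succ} = n r)
    (z : Fin (M + 1) → K) (hz : z 0 = 0) : ∑ i, z (R i) = ∑ r, n r • z r.succ := by
  rw [Fintype.sum_comp_eq_sum_card_fiber_nsmul, Fin.sum_univ_succ, hz, smul_zero, zero_add]
  simp only [hRr]

theorem exists_sum_nsmul_eq_of_assignment [AddGroup ι] (hexp : ∀ x : K, Fintype.card ι • x = x)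
    (hRr : ∀ r : Fin M, #{i | R i = r.succ} = n r) {a : K} (s : ι × Fin (M + 1) → K)
    (h0 : ∑ i, s (i, 0) = 0) (hv : ∀ v, ∑ i, s (i, R (i + v)) = a) :
    ∃ y : Fin M → K, ∑ r, n r • y r = a := by
  refine ⟨fun r => ∑ i, s (i, r.succ), ?_⟩
  calc ∑ r, n r • ∑ i, s (i, r.succ)
      = ∑ j, ∑ i, s (i, R j) := (sum_comp_eq_sum_nsmul_succ hRr (fun t => ∑ i, s (i, t)) h0).symm
    _ = ∑ i, ∑ v, s (i, R (i + v)) := by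
      rw [sum_comm]
      exact sum_congr rfl fun i _ => (Equiv.sum_comp (Equiv.addLeft i) fun j => s (i, R j)).symm
    _ = Fintype.card ι • a := by rw [sum_comm]; simp [hv]
    _ = a := hexp a

end Scenario

theorem mermin_probabilistic_lhv_iff_solution_general
    {K : Type} [AddCommGroup K] [Fintype K] [DecidableEq K]
    (a : K) (M : ℕ) (n : Fin M → ℕ)
    (N : ℕ) [NeZero N]
    (hexp : ∀ x : K, N • x = x)
    (R : ZMod N → Fin (M + 1))
    (hRr : ∀ r : Fin M, (Finset.univ.filter fun i : ZMod N => R i = r.succ).card = n r) :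
    (∃ p : ((ZMod N × Fin (M + 1)) → K) → ℝ,
      (∀ s, 0 ≤ p s) ∧
      (∑ s : (ZMod N × Fin (M + 1)) → K, p s = 1) ∧
      (∀ w : ZMod N → K,
        ∑ s ∈ Finset.univ.filter
            (fun s : (ZMod N × Fin (M + 1)) → K => ∀ i : ZMod N, s (i, 0) = w i), p s
          = if ∑ i : ZMod N, w i = 0 then ((Fintype.card K : ℝ) ^ (N - 1))⁻¹ else 0) ∧
      (∀ v : ZMod N, ∀ w : ZMod N → K,
        ∑ s ∈ Finset.univ.filter
            (fun s : (ZMod N × Fin (M + 1)) → K => ∀ i : ZMod N, s (i, R (i + v)) = w i), p s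
          = if ∑ i : ZMod N, w i = a then ((Fintype.card K : ℝ) ^ (N - 1))⁻¹ else 0))
    ↔ ∃ y : Fin M → K, ∑ r, n r • y r = a := by
  constructor
  · rintro ⟨p, hp, hp₁, hcontrol, hvariation⟩
    obtain ⟨s, -, hs⟩ := exists_ne_zero_of_sum_ne_zero (hp₁ ▸ one_ne_zero : ∑ s, p s ≠ 0)
    have hpos := (hp s).lt_of_ne' hs
    refine exists_sum_nsmul_eq_of_assignment (by simpa using hexp) hRr s ?_ fun v => ?_
    · exact of_marginal_eq_ite_of_pos hp hpos (fun i => (i, 0)) (hcontrol _)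
    · exact of_marginal_eq_ite_of_pos hp hpos (fun i => (i, R (i + v))) (hvariation v _)
  · rintro ⟨y, rfl⟩
    let δ : Fin (M + 1) → K := Fin.cons 0 y
    have hδ (v : ZMod N) : ∑ i, δ (R (i + v)) = ∑ r, n r • y r :=
      (Equiv.sum_comp (Equiv.addRight v) fun j => δ (R j)).trans
        (sum_comp_eq_sum_nsmul_succ hRr δ rfl)
    refine ⟨shiftedModel δ, shiftedModel_nonneg δ, sum_univ_shiftedModel δ, fun w => ?_,
      fun v w => ?_⟩
    · simpa [marginal, δ] using marginal_shiftedModel δ (fun _ => 0) w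
    · simpa [marginal, hδ] using marginal_shiftedModel δ (fun i => R (i + v)) w

/-- The Mermin measurement scenario with data `(K, a, M, n, N, n₀, R)` admits a
probabilistic non-contextual (local) hidden variable model if and only if the equation
`⊕_r n_r • y_r = a` has a solution in `K`. -/
theorem mermin_probabilistic_lhv_iff_solution
    {K : Type} [AddCommGroup K] [Fintype K] [DecidableEq K]
    (a : K) (M : ℕ) (hM : 1 ≤ M) (n : Fin M → ℕ) (hn : ∀ r, 1 ≤ n r)
    (N : ℕ) [NeZero N] (hN : 1 ≤ N) (hsum : ∑ r, n r ≤ N)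
    (hexp : ∀ x : K, N • x = x)
    (R : ZMod N → Fin (M + 1))
    (hR0 : (Finset.univ.filter fun i : ZMod N => R i = 0).card = N - ∑ r, n r)
    (hRr : ∀ r : Fin M, (Finset.univ.filter fun i : ZMod N => R i = r.succ).card = n r) :
    (∃ p : ((ZMod N × Fin (M + 1)) → K) → ℝ,
      (∀ s, 0 ≤ p s) ∧
      (∑ s : (ZMod N × Fin (M + 1)) → K, p s = 1) ∧
      (∀ w : ZMod N → K,
        ∑ s ∈ Finset.univ.filter
            (fun s : (ZMod N × Fin (M + 1)) → K => ∀ i : ZMod N, s (i, 0) = w i), p s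
          = if ∑ i : ZMod N, w i = 0 then ((Fintype.card K : ℝ) ^ (N - 1))⁻¹ else 0) ∧
      (∀ v : ZMod N, ∀ w : ZMod N → K,
        ∑ s ∈ Finset.univ.filter
            (fun s : (ZMod N × Fin (M + 1)) → K => ∀ i : ZMod N, s (i, R (i + v)) = w i), p s
          = if ∑ i : ZMod N, w i = a then ((Fintype.card K : ℝ) ^ (N - 1))⁻¹ else 0))
    ↔ ∃ y : Fin M → K, ∑ r, n r • y r = a :=
  mermin_probabilistic_lhv_iff_solution_general a M n N hexp R hRr
end

section
/- Let K be a finite abelian group and consider a Mermin measurement scenario with data (K, a, M, n, N, n₀, R) as in the context. Then there exists a global assignment s : ZMod N × Fin (M+1) → K whose restriction to every context lies in the support of that context — i.e. with ∑_{i : ZMod N} s (i, 0) = 0 and, for every v : ZMod N, ∑_{i : ZMod N} s (i, R (i + v)) = a — if and only if there exists y : Fin M → K with ∑_{r : Fin M} (n r) • y r = a. (Equivalently: the Mermin empirical model is strongly contextual iff the equation ⊕_r n_r y_r = a has no solution in K.) -/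
/-!
Summing the `N` variation equations and exchanging the sums, each party `i` sees every phase
`R j` as `v` runs over `ZMod N`, i.e. phase `0` exactly `n₀` times and phase `r + 1` exactly
`n r` times. The control equation kills the phase-`0` part, and `N • a = a`, so
`y r := ∑ i, s (i, r + 1)` solves `∑ r, n r • y r = a`. Conversely a solution `y` gives the
assignment `s (i, 0) = 0`, `s (i, r + 1) = y r`, whose every variation context sums to
`∑ r, n r • y r`.
-/

open Finset

theorem sum_comp_eq_fiber_card_smul {ι K : Type*} [Fintype ι] [AddCommMonoid K] {M : ℕ}
    (R : ι → Fin (M + 1)) (c₀ : ℕ) (c : Fin M → ℕ)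
    (h₀ : #{i | R i = 0} = c₀) (hc : ∀ r, #{i | R i = r.succ} = c r) (g : Fin (M + 1) → K) :
    ∑ i, g (R i) = c₀ • g 0 + ∑ r, c r • g r.succ := by
  simp only [← sum_fiberwise' univ R g, sum_const, Fin.sum_univ_succ, h₀, hc]

theorem sum_sum_comp_add_right {G α K : Type*} [AddCommGroup G] [Fintype G] [AddCommMonoid K]
    (R : G → α) (s : G × α → K) :
    ∑ v, ∑ i, s (i, R (i + v)) = ∑ i, ∑ j, s (i, R j) := by
  rw [sum_comm]
  exact sum_congr rfl fun i _ => Fintype.sum_equiv (Equiv.addLeft i) _ _ fun _ => rfl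

theorem mermin_global_assignment_iff_solution_general
    {K : Type} [AddCommGroup K]
    (a : K) (M : ℕ) (n : Fin M → ℕ)
    (N : ℕ) [NeZero N]
    (hexp : ∀ x : K, N • x = x)
    (R : ZMod N → Fin (M + 1))
    (hR0 : (Finset.univ.filter fun i : ZMod N => R i = 0).card = N - ∑ r, n r)
    (hRr : ∀ r : Fin M, (Finset.univ.filter fun i : ZMod N => R i = r.succ).card = n r) :
    (∃ s : ZMod N × Fin (M + 1) → K,
      (∑ i : ZMod N, s (i, 0) = 0) ∧
      (∀ v : ZMod N, ∑ i : ZMod N, s (i, R (i + v)) = a))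
    ↔ ∃ y : Fin M → K, ∑ r, n r • y r = a := by
  have hfib := sum_comp_eq_fiber_card_smul (K := K) R _ n hR0 hRr
  constructor
  · rintro ⟨s, hcontrol, hvar⟩
    refine ⟨fun r => ∑ i, s (i, r.succ), ?_⟩
    calc ∑ r, n r • ∑ i, s (i, r.succ)
        = ∑ i, ((N - ∑ r, n r) • s (i, 0) + ∑ r, n r • s (i, r.succ)) := by
          rw [sum_add_distrib, ← smul_sum, hcontrol, smul_zero, zero_add, sum_comm]
          simp only [smul_sum]
      _ = ∑ i, ∑ j, s (i, R j) := sum_congr rfl fun i _ => (hfib fun t => s (i, t)).symm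
      _ = ∑ v, ∑ i, s (i, R (i + v)) := (sum_sum_comp_add_right R s).symm
      _ = N • a := by simp [hvar]
      _ = a := hexp a
  · rintro ⟨y, hy⟩
    refine ⟨fun p => Fin.cases 0 y p.2, by simp, fun v => ?_⟩
    calc ∑ i, Fin.cases 0 y (R (i + v)) = ∑ j, Fin.cases 0 y (R j) := by
          exact Fintype.sum_equiv (Equiv.addRight v) _ _ fun _ => rfl
      _ = a := by simp [hfib, hy]

/-- The Mermin empirical model admits a global assignment whose restriction to
every context lies in the support of that context if and only if the equation
`⊕_r n_r • y_r = a` has a solution in `K` (equivalently, the model is strongly contextual iff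
the equation has no solution in `K`). -/
theorem mermin_global_assignment_iff_solution
    {K : Type} [AddCommGroup K] [Fintype K]
    (a : K) (M : ℕ) (hM : 1 ≤ M) (n : Fin M → ℕ) (hn : ∀ r, 1 ≤ n r)
    (N : ℕ) [NeZero N] (hN : 1 ≤ N) (hsum : ∑ r, n r ≤ N)
    (hexp : ∀ x : K, N • x = x)
    (R : ZMod N → Fin (M + 1))
    (hR0 : (Finset.univ.filter fun i : ZMod N => R i = 0).card = N - ∑ r, n r)
    (hRr : ∀ r : Fin M, (Finset.univ.filter fun i : ZMod N => R i = r.succ).card = n r) :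
    (∃ s : ZMod N × Fin (M + 1) → K,
      (∑ i : ZMod N, s (i, 0) = 0) ∧
      (∀ v : ZMod N, ∑ i : ZMod N, s (i, R (i + v)) = a))
    ↔ ∃ y : Fin M → K, ∑ r, n r • y r = a :=
  mermin_global_assignment_iff_solution_general a M n N hexp R hR0 hRr
end

section
/- (Quantum realisability, algebraic core.) Let K be a finite abelian group and let (n : Fin S → Fin M → ℤ, a : Fin S → K) be a consistent finite system of ℤ-module equations valued in K. Then, with d := Fintype.card K − 1, there exist an injective additive group homomorphism ι : K →+ (Fin d → AddCircle (2π : ℝ)) into the d-dimensional torus of Z-phases, and phases β : Fin M → (Fin d → AddCircle (2π : ℝ)), such that for every s : Fin S one has ∑_{r : Fin M} (n s r) • β r = ι (a s). In other words, the system acquires a solution in the torus of Z-phases of a Hilbert space of dimension card K, with the X-classical points forming a subgroup isomorphic to K. -/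
/-!
Consistency says that `c ↦ ∑ₛ cₛ • aₛ` vanishes on the kernel of `c ↦ c ᵥ* n : ℤ^S → ℤ^M`.
Composed with an embedding `ι` of `K` into a divisible, hence injective, group such as a torus,
it therefore factors as `H ∘ (· ᵥ* n)` with `H : ℤ^M → torus`, and `β r := H (Pi.single r 1)`
solves the system. A finite `K` embeds into the `(card K - 1)`-torus because each nonzero
element is detected by a `ℚ/ℤ`-valued character and `ℚ/ℤ` embeds into `ℝ/2πℤ`.
-/

open Finset

theorem Module.Baer.exists_comp_eq_of_ker_le {R Q M N : Type*} [Ring R] [AddCommGroup Q]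
    [Module R Q] [AddCommGroup M] [AddCommGroup N] [Module R M] [Module R N]
    (hQ : Module.Baer R Q) (f : M →ₗ[R] N) (g : M →ₗ[R] Q)
    (hfg : LinearMap.ker f ≤ LinearMap.ker g) : ∃ h : N →ₗ[R] Q, h ∘ₗ f = g := by
  obtain ⟨h, hh⟩ := hQ.extension_property (f.ker.liftQ f le_rfl)
    (LinearMap.ker_eq_bot.mp (Submodule.ker_liftQ_eq_bot _ _ _ le_rfl)) (f.ker.liftQ g hfg)
  exact ⟨h, LinearMap.ext fun x => LinearMap.congr_fun hh (Submodule.Quotient.mk x)⟩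

theorem exists_solution_of_consistent {σ μ K P : Type*} [Fintype σ] [Fintype μ] [DecidableEq σ]
    [DecidableEq μ] [AddCommGroup K] [AddCommGroup P] [DivisibleBy P ℤ] (ι : K →+ P)
    (n : σ → μ → ℤ) (a : σ → K)
    (hconsistent : ∀ c : σ → ℤ, (∀ r, ∑ s, c s * n s r = 0) → ∑ s, c s • a s = 0) :
    ∃ y : μ → P, ∀ s, ∑ r, n s r • y r = ι (a s) := by
  obtain ⟨h, hh⟩ := (Module.Baer.of_divisible P).exists_comp_eq_of_ker_le
    (Matrix.vecMulLinear (Matrix.of n)) (ι.toIntLinearMap ∘ₗ Fintype.linearCombination ℤ a)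
    fun c hc => by simp [Fintype.linearCombination_apply, hconsistent c (congrFun hc)]
  refine ⟨fun r => h (Pi.single r 1), fun s => ?_⟩
  calc ∑ r, n s r • h (Pi.single r 1)
      = h (n s) := by
        simp_rw [← h.map_smul, ← map_sum, ← Pi.single_smul', smul_eq_mul, mul_one,
          Finset.univ_sum_single]
    _ = h (Matrix.vecMulLinear (Matrix.of n) (Pi.single s 1)) := by
        rw [Matrix.vecMulLinear_apply, Matrix.single_vecMul, one_smul]
        rfl
    _ = ι (a s) := by simpa using LinearMap.congr_fun hh (Pi.single s 1)

namespace AddCircle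

variable (𝕜 : Type*) [DivisionRing 𝕜] [CharZero 𝕜]

def ratCastHom : AddCircle (1 : ℚ) →+ AddCircle (1 : 𝕜) :=
  QuotientAddGroup.map _ _ (Rat.castHom 𝕜).toAddMonoidHom <| by
    rintro _ ⟨k, rfl⟩
    exact ⟨k, by simp⟩

theorem ratCastHom_injective : Function.Injective (ratCastHom 𝕜) := by
  rw [injective_iff_map_eq_zero]
  rintro ⟨q⟩ hq
  obtain ⟨k, hk⟩ := (coe_eq_zero_iff _).mp hq
  refine (coe_eq_zero_iff _).mpr ⟨k, ?_⟩
  rw [zsmul_one]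
  exact_mod_cast (by simpa using hk : ((k : ℚ) : 𝕜) = q)

end AddCircle

theorem exists_injective_addMonoidHom_fin_pi {K Q : Type*} [AddCommGroup K] [Fintype K]
    [AddCommGroup Q] (φ : AddCircle (1 : ℚ) →+ Q) (hφ : Function.Injective φ) :
    ∃ ι : K →+ (Fin (Fintype.card K - 1) → Q), Function.Injective ι := by
  classical
  have hcard : Fintype.card {x : K // x ≠ 0} = Fintype.card K - 1 := by
    simp [Fintype.card_subtype_compl (· = (0 : K))]
  let e := Fintype.equivFinOfCardEq hcard
  choose χ hχ using fun x : {x : K // x ≠ 0} =>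
    CharacterModule.exists_character_apply_ne_zero_of_ne_zero x.2
  refine ⟨AddMonoidHom.pi fun j => φ.comp (χ (e.symm j)), ?_⟩
  rw [injective_iff_map_eq_zero]
  intro x hx
  by_contra hx0
  have hx' := congrFun hx (e ⟨x, hx0⟩)
  rw [AddMonoidHom.pi_apply, Equiv.symm_apply_apply] at hx'
  exact hχ ⟨x, hx0⟩ (hφ (hx'.trans φ.map_zero.symm))

/-- Quantum realisability, algebraic core: every consistent finite system of
`ℤ`-module equations valued in a finite abelian group `K` acquires a solution in the
`d`-dimensional torus of `Z`-phases (`d = card K - 1`), with the `X`-classical points embedded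
as a subgroup isomorphic to `K`. -/
theorem quantum_realisability_algebraic_core
    {K : Type} [AddCommGroup K] [Fintype K]
    (S M : ℕ) (n : Fin S → Fin M → ℤ) (a : Fin S → K)
    (hconsistent : ∀ c : Fin S → ℤ,
      (∀ r : Fin M, ∑ s, c s * n s r = 0) → ∑ s, c s • a s = 0) :
    ∃ ι : K →+ (Fin (Fintype.card K - 1) → AddCircle (2 * Real.pi)),
      Function.Injective ι ∧
      ∃ β : Fin M → (Fin (Fintype.card K - 1) → AddCircle (2 * Real.pi)),
        ∀ s : Fin S, ∑ r, n s r • β r = ι (a s) := by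
  have h2π : 0 < 2 * Real.pi := by positivity
  have : Fact (0 < 2 * Real.pi) := ⟨h2π⟩
  let e := AddCircle.equivAddCircle (1 : ℝ) (2 * Real.pi) one_ne_zero h2π.ne'
  obtain ⟨ι, hι⟩ := exists_injective_addMonoidHom_fin_pi (K := K)
    (e.toAddMonoidHom.comp (AddCircle.ratCastHom ℝ))
    (e.injective.comp (AddCircle.ratCastHom_injective ℝ))
  obtain ⟨β, hβ⟩ := exists_solution_of_consistent ι n a hconsistent
  exact ⟨ι, hι, β, hβ⟩
end

section
/- (Gaussian elimination in S¹.) Let (n : Fin S → Fin M → ℤ, a : Fin S → AddCircle (2π : ℝ)) be a finite system of ℤ-module equations valued in the circle group S¹ = ℝ/2πℤ, and assume the system is consistent: for every c : Fin S → ℤ with ∑_s (c s) * (n s r) = 0 for all r : Fin M one has ∑_s (c s) • (a s) = 0 in AddCircle (2π : ℝ). Then the system has a solution in S¹: there exists β : Fin M → AddCircle (2π : ℝ) with ∑_{r : Fin M} (n s r) • β r = a s for every s : Fin S. -/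
/-!
The consistency condition says that `c ↦ ∑ s, c s • a s` vanishes on the kernel of
`c ↦ c ᵥ* n`, so it factors through the image of that map. The circle group is divisible, hence
an injective `ℤ`-module, so the factored map extends to some `φ : (Fin M → ℤ) → S¹`, and
`β r := φ (Pi.single r 1)` solves the system.
-/

universe v

namespace LinearMap

variable {R M N : Type*} [Ring R] [AddCommGroup M] [AddCommGroup N] [Module R M] [Module R N]

theorem exists_comp_eq_of_ker_le [Small.{v} R] {Q : Type v} [AddCommGroup Q] [Module R Q]
    [Module.Injective R Q] (f : M →ₗ[R] N) (g : M →ₗ[R] Q) (hfg : ker f ≤ ker g) :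
    ∃ h : N →ₗ[R] Q, h ∘ₗ f = g := by
  let g₀ : range f →ₗ[R] Q := (ker f).liftQ g hfg ∘ₗ f.quotKerEquivRange.symm.toLinearMap
  obtain ⟨h, hh⟩ := Module.Injective.extension_property R Q _ _ (range f).subtype
    (Submodule.injective_subtype _) g₀
  refine ⟨h, LinearMap.ext fun x => ?_⟩
  simpa [g₀, quotKerEquivRange_symm_apply_image] using congr($hh ⟨f x, mem_range_self f x⟩)

end LinearMap

namespace Matrix

theorem exists_sum_smul_eq_of_vecMul_eq_zero {R ι κ : Type*} [Ring R] [Small.{v} R]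
    {K : Type v} [AddCommGroup K] [Module R K] [Module.Injective R K] [Fintype ι] [Fintype κ]
    (N : Matrix ι κ R) (a : ι → K) (hN : ∀ c : ι → R, c ᵥ* N = 0 → ∑ s, c s • a s = 0) :
    ∃ β : κ → K, ∀ s, ∑ r, N s r • β r = a s := by
  classical
  obtain ⟨φ, hφ⟩ := N.vecMulLinear.exists_comp_eq_of_ker_le (Fintype.linearCombination R a)
    fun c hc => LinearMap.mem_ker.2 <|
      (Fintype.linearCombination_apply R a c).trans (hN c (LinearMap.mem_ker.1 hc))
  refine ⟨fun r => φ (Pi.single r 1), fun s => ?_⟩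
  calc ∑ r, N s r • φ (Pi.single r 1) = φ (Pi.single s 1 ᵥ* N) := by
        rw [single_one_vecMul, pi_eq_sum_univ' (N.row s), map_sum]
        simp only [map_smul, row]
    _ = a s := by simpa using congr($hφ (Pi.single s 1))

end Matrix

/-- Gaussian elimination in `S¹`: every consistent finite system of `ℤ`-module
equations valued in the circle group `ℝ/2πℤ` has a solution in the circle group. -/
theorem gaussian_elimination_in_circle
    (S M : ℕ) (n : Fin S → Fin M → ℤ) (a : Fin S → AddCircle (2 * Real.pi))
    (hconsistent : ∀ c : Fin S → ℤ,
      (∀ r : Fin M, ∑ s, c s * n s r = 0) → ∑ s, c s • a s = 0) :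
    ∃ β : Fin M → AddCircle (2 * Real.pi),
      ∀ s : Fin S, ∑ r, n s r • β r = a s := by
  have : Fact (0 < 2 * Real.pi) := ⟨Real.two_pi_pos⟩
  have : Module.Injective ℤ (AddCircle (2 * Real.pi)) := (Module.Baer.of_divisible _).injective
  exact Matrix.exists_sum_smul_eq_of_vecMul_eq_zero n a fun c hc => hconsistent c (congrFun hc)
end

section
/- (Mermin's parity lemma for three qubits.) Let α : Fin 3 → ℝ and c ∈ ZMod 2 with Complex.exp (Complex.I * ∑_j α j) = (−1 : ℂ)^(c.val). Define ψ : (Fin 3 → ZMod 2) → ℂ by ψ x = (Real.sqrt 2)⁻¹ if x is the constant-0 function, ψ x = Complex.exp (Complex.I * ∑_j α j) * (Real.sqrt 2)⁻¹ if x is the constant-1 function, and ψ x = 0 otherwise; and for b : Fin 3 → ZMod 2 define φ_b x = (Real.sqrt 8)⁻¹ * ∏_{j : Fin 3} (−1 : ℂ)^((b j * x j).val). If ∑_j b j ≠ c in ZMod 2, then ∑_{x : Fin 3 → ZMod 2} (φ_b x) * (ψ x) = 0. (Hence if α₁ ⊕ α₂ ⊕ α₃ = 0 or π mod 2π, the ℤ/2-sum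 of the X-measurement outcomes on the phase-gated 3-qubit GHZ state is deterministically 0 or 1 respectively.) -/
/-- The 3-qubit GHZ state with local phase gates `P_{α j} = diag(1, e^{i α j})` applied:
amplitude `2^{-1/2}` on the all-0 basis vector, `2^{-1/2} e^{i ∑ α j}` on the all-1 basis
vector, and `0` elsewhere. -/
noncomputable def ghz3Phased (α : Fin 3 → ℝ) (x : Fin 3 → ZMod 2) : ℂ :=
  if x = (fun _ => 0) then ((Real.sqrt 2)⁻¹ : ℝ)
  else if x = (fun _ => 1) then
    Complex.exp (Complex.I * ((∑ j, α j : ℝ) : ℂ)) * ((Real.sqrt 2)⁻¹ : ℝ)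
  else 0

/-- The joint eigenvector of the three single-qubit Pauli `X` observables with outcome
`b : Fin 3 → ZMod 2`, with amplitudes `8^{-1/2} ∏ j (-1)^{b j · x j}`. -/
noncomputable def pauliX3JointEigvec (b : Fin 3 → ZMod 2) (x : Fin 3 → ZMod 2) : ℂ :=
  ((Real.sqrt 8)⁻¹ : ℝ) * ∏ j : Fin 3, (-1 : ℂ) ^ ((b j * x j).val)

/-!
The phased GHZ state is supported on the all-0 and all-1 basis vectors, where the `X`-eigenvector
has amplitudes `8^{-1/2}` and `8^{-1/2} (-1)^{∑ b j}`. The overlap is therefore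
`4^{-1} (1 + (-1)^{∑ b j} e^{i ∑ α j}) = 4^{-1} (1 + (-1)^{(∑ b j + c).val})`, and
`∑ b j ≠ c` in `ZMod 2` forces `∑ b j + c = 1`.
-/

theorem neg_one_pow_val_sum {R ι : Type*} [CommRing R] (s : Finset ι) (f : ι → ZMod 2) :
    ∏ i ∈ s, (-1 : R) ^ (f i).val = (-1) ^ (∑ i ∈ s, f i).val := by
  have hcast : ∑ i ∈ s, f i = ((∑ i ∈ s, (f i).val : ℕ) : ZMod 2) := by
    push_cast
    simp only [ZMod.natCast_val, ZMod.cast_id', id]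
  rw [Finset.prod_pow_eq_pow_sum, hcast, ZMod.val_natCast, ← neg_one_pow_eq_pow_mod_two]

theorem neg_one_pow_val_add {R : Type*} [Ring R] (a b : ZMod 2) :
    (-1 : R) ^ (a + b).val = (-1) ^ a.val * (-1) ^ b.val := by
  rw [ZMod.val_add, ← neg_one_pow_eq_pow_mod_two, pow_add]

theorem zmodTwo_add_eq_one_of_ne : ∀ {a b : ZMod 2}, a ≠ b → a + b = 1 := by
  decide

theorem sum_mul_ghz3Phased (α : Fin 3 → ℝ) (f : (Fin 3 → ZMod 2) → ℂ) :
    ∑ x, f x * ghz3Phased α x =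
      (f 0 + f 1 * Complex.exp (Complex.I * ((∑ j, α j : ℝ) : ℂ))) * ((Real.sqrt 2)⁻¹ : ℝ) := by
  have hne : (0 : Fin 3 → ZMod 2) ≠ 1 := fun h => zero_ne_one (congrFun h 0)
  rw [Fintype.sum_eq_add 0 1 hne]
  · simp only [ghz3Phased, ← Pi.zero_def, ← Pi.one_def, hne.symm, ↓reduceIte]
    ring
  · rintro x ⟨hx0, hx1⟩
    simp [ghz3Phased, ← Pi.zero_def, ← Pi.one_def, hx0, hx1]

theorem pauliX3JointEigvec_zero (b : Fin 3 → ZMod 2) :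
    pauliX3JointEigvec b 0 = ((Real.sqrt 8)⁻¹ : ℝ) := by
  simp [pauliX3JointEigvec]

theorem pauliX3JointEigvec_one (b : Fin 3 → ZMod 2) :
    pauliX3JointEigvec b 1 = ((Real.sqrt 8)⁻¹ : ℝ) * (-1 : ℂ) ^ (∑ j, b j).val := by
  simp only [pauliX3JointEigvec, Pi.one_apply, mul_one, neg_one_pow_val_sum]

/-- Mermin's parity lemma for three qubits: if `e^{i ∑ α j} = (-1)^c` and the
`ℤ/2`-sum of the outcomes `b j` differs from `c`, then the joint outcome `b` has amplitude
zero on the phase-gated 3-qubit GHZ state. -/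
theorem mermin_parity_lemma (α : Fin 3 → ℝ) (c : ZMod 2)
    (hα : Complex.exp (Complex.I * ((∑ j, α j : ℝ) : ℂ)) = (-1 : ℂ) ^ c.val)
    (b : Fin 3 → ZMod 2) (hb : ∑ j, b j ≠ c) :
    ∑ x : Fin 3 → ZMod 2, pauliX3JointEigvec b x * ghz3Phased α x = 0 := by
  have hsign : (-1 : ℂ) ^ (∑ j, b j).val * (-1) ^ c.val = -1 := by
    rw [← neg_one_pow_val_add, zmodTwo_add_eq_one_of_ne hb, ZMod.val_one, pow_one]
  rw [sum_mul_ghz3Phased, pauliX3JointEigvec_zero, pauliX3JointEigvec_one, hα, mul_assoc, hsign]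
  ring
end
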